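/- Let d ≥ 1, r > 0, and let g_r(x) = (2πr)^{−d/2} e^{−‖x‖₂²/(2r)} be the N(0, rI_d) density on ℝ^d. Let p(x) = Σ_{i=1}^{N} p_i g_r(x − x_i) and q(y) = Σ_{j=1}^{M} q_j g_r(y − y_j) be finite Gaussian mixture densities, where p_i, q_j ≥ 0, Σ_i p_i = Σ_j q_j = 1, and x_i, y_j ∈ ℝ^d. Then the convolution p ∗ q satisfies (p ∗ q)(t) ≥ (πr)^{d/2} · p(τ) · q(t − τ) for every t, τ ∈ ℝ^d. -/

import Mathlib

open MeasureTheory Set Filter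
open scoped ENNReal

/-- The density of the centered Gaussian distribution `N(0, sI_d)` on `ℝ^d`:
`g_s(x) = (2πs)^{−d/2} e^{−‖x‖²/(2s)}`. -/
noncomputable def gaussDens (d : ℕ) (s : ℝ) (x : EuclideanSpace ℝ (Fin d)) : ℝ :=
  (2 * Real.pi * s) ^ (-(d : ℝ) / 2) * Real.exp (-‖x‖ ^ 2 / (2 * s))

/-!
By Apollonius' theorem, `g_r(σ - a) g_r(c - σ) = g_{2r}(c - a) · g_{r/2}(σ - midpoint a c)`.
The last factor integrates to `1` in `σ` and never exceeds its peak value `(πr)^{-d/2}`, which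
gives the inequality for a single pair of components. Both sides are bilinear in `(p, q)`, so it
passes to mixtures with nonnegative weights.
-/

open Real

section GaussianDensity

variable {d : ℕ} {s : ℝ}

theorem integral_gaussDens (hs : 0 < s) (m : EuclideanSpace ℝ (Fin d)) :
    ∫ x, gaussDens d s (x - m) = 1 := by
  have hexp : ∀ x : EuclideanSpace ℝ (Fin d), -‖x‖ ^ 2 / (2 * s) = -(2 * s)⁻¹ * ‖x‖ ^ 2 :=
    fun x => by ring
  rw [integral_sub_right_eq_self (gaussDens d s)]
  simp only [gaussDens, hexp]
  rw [integral_const_mul, GaussianFourier.integral_rexp_neg_mul_sq_norm (by positivity),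
    finrank_euclideanSpace_fin, div_inv_eq_mul, neg_div, rpow_neg (by positivity),
    show π * (2 * s) = 2 * π * s by ring, inv_mul_cancel₀ (by positivity)]

theorem integrable_gaussDens (hs : 0 < s) (m : EuclideanSpace ℝ (Fin d)) :
    Integrable fun x => gaussDens d s (x - m) :=
  Integrable.of_integral_ne_zero (by simp [integral_gaussDens hs m])

theorem gaussDens_le (hs : 0 < s) (x : EuclideanSpace ℝ (Fin d)) :
    gaussDens d s x ≤ ((2 * π * s) ^ ((d : ℝ) / 2))⁻¹ := by
  rw [gaussDens, neg_div, ← rpow_neg (by positivity)]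
  refine mul_le_of_le_one_right (by positivity) (exp_le_one_iff.2 ?_)
  rw [neg_div]
  exact neg_nonpos.2 (by positivity)

theorem gaussDens_sub_mul_gaussDens_sub (hs : 0 < s) (a c σ : EuclideanSpace ℝ (Fin d)) :
    gaussDens d s (σ - a) * gaussDens d s (c - σ)
      = gaussDens d (2 * s) (c - a) * gaussDens d (s / 2) (σ - midpoint ℝ a c) := by
  have hconst : (2 * π * s) ^ (-(d : ℝ) / 2) * (2 * π * s) ^ (-(d : ℝ) / 2)
      = (2 * π * (2 * s)) ^ (-(d : ℝ) / 2) * (2 * π * (s / 2)) ^ (-(d : ℝ) / 2) := by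
    rw [← mul_rpow (by positivity) (by positivity), ← mul_rpow (by positivity) (by positivity)]
    ring_nf
  have hapollonius :=
    EuclideanGeometry.dist_sq_add_dist_sq_eq_two_mul_dist_midpoint_sq_add_half_dist_sq σ a c
  rw [dist_eq_norm, dist_eq_norm, dist_eq_norm, dist_eq_norm, norm_sub_rev σ c] at hapollonius
  have hexp : -‖σ - a‖ ^ 2 / (2 * s) + -‖c - σ‖ ^ 2 / (2 * s)
      = -‖c - a‖ ^ 2 / (2 * (2 * s)) + -‖σ - midpoint ℝ a c‖ ^ 2 / (2 * (s / 2)) := by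
    rw [norm_sub_rev c a]
    field_simp
    linear_combination (-2) * hapollonius
  simp only [gaussDens]
  calc _ = (2 * π * s) ^ (-(d : ℝ) / 2) * (2 * π * s) ^ (-(d : ℝ) / 2)
        * exp (-‖σ - a‖ ^ 2 / (2 * s) + -‖c - σ‖ ^ 2 / (2 * s)) := by rw [exp_add]; ring
    _ = _ := by rw [hconst, hexp, exp_add]; ring

theorem integrable_gaussDens_sub_mul_gaussDens_sub (hs : 0 < s)
    (a c : EuclideanSpace ℝ (Fin d)) :
    Integrable fun σ => gaussDens d s (σ - a) * gaussDens d s (c - σ) := by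
  simp only [gaussDens_sub_mul_gaussDens_sub hs]
  exact (integrable_gaussDens (half_pos hs) _).const_mul _

theorem rpow_mul_gaussDens_sub_mul_gaussDens_sub_le_integral (hs : 0 < s)
    (a c τ : EuclideanSpace ℝ (Fin d)) :
    (π * s) ^ ((d : ℝ) / 2) * (gaussDens d s (τ - a) * gaussDens d s (c - τ))
      ≤ ∫ σ, gaussDens d s (σ - a) * gaussDens d s (c - σ) := by
  have hpeak : (π * s) ^ ((d : ℝ) / 2) * gaussDens d (s / 2) (τ - midpoint ℝ a c) ≤ 1 := by
    have h := gaussDens_le (d := d) (half_pos hs) (τ - midpoint ℝ a c)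
    rw [show 2 * π * (s / 2) = π * s by ring] at h
    calc _ ≤ (π * s) ^ ((d : ℝ) / 2) * ((π * s) ^ ((d : ℝ) / 2))⁻¹ := by gcongr
      _ = 1 := mul_inv_cancel₀ (by positivity)
  simp only [gaussDens_sub_mul_gaussDens_sub hs]
  rw [integral_const_mul, integral_gaussDens (half_pos hs), mul_left_comm]
  refine mul_le_mul_of_nonneg_left hpeak ?_
  unfold gaussDens
  positivity

end GaussianDensity

theorem mul_sum_le_integral_sum {α ι : Type*} [MeasurableSpace α] {μ : Measure α}
    (s : Finset ι) {c : ι → ℝ} (hc : ∀ i ∈ s, 0 ≤ c i) {F : ι → α → ℝ}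
    (hF : ∀ i ∈ s, Integrable (F i) μ) {K : ℝ} {τ : α}
    (h : ∀ i ∈ s, K * F i τ ≤ ∫ σ, F i σ ∂μ) :
    K * ∑ i ∈ s, c i * F i τ ≤ ∫ σ, ∑ i ∈ s, c i * F i σ ∂μ := by
  rw [integral_finsetSum s fun i hi => (hF i hi).const_mul _, Finset.mul_sum]
  refine Finset.sum_le_sum fun i hi => ?_
  rw [integral_const_mul, mul_left_comm]
  exact mul_le_mul_of_nonneg_left (h i hi) (hc i hi)

theorem mixture_convolution_ge_general
    (d : ℕ) (r : ℝ) (hr : 0 < r) (N M : ℕ)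
    (w : Fin N → ℝ) (v : Fin M → ℝ)
    (hw : ∀ i, 0 ≤ w i) (hv : ∀ j, 0 ≤ v j)
    (x : Fin N → EuclideanSpace ℝ (Fin d)) (y : Fin M → EuclideanSpace ℝ (Fin d))
    (p q : EuclideanSpace ℝ (Fin d) → ℝ)
    (hp : ∀ z, p z = ∑ i, w i * gaussDens d r (z - x i))
    (hq : ∀ z, q z = ∑ j, v j * gaussDens d r (z - y j)) :
    ∀ t τ : EuclideanSpace ℝ (Fin d),
      (Real.pi * r) ^ ((d : ℝ) / 2) * p τ * q (t - τ) ≤ ∫ σ, p σ * q (t - σ) := by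
  intro t τ
  have hpq : ∀ σ, p σ * q (t - σ) = ∑ k : Fin N × Fin M,
      w k.1 * v k.2 * (gaussDens d r (σ - x k.1) * gaussDens d r (t - y k.2 - σ)) := by
    intro σ
    rw [hp, hq, Fintype.sum_mul_sum, ← Fintype.sum_prod_type']
    refine Fintype.sum_congr _ _ fun k => ?_
    rw [sub_right_comm]
    ring
  rw [mul_assoc, hpq τ]
  simp only [hpq]
  exact mul_sum_le_integral_sum _ (fun k _ => mul_nonneg (hw k.1) (hv k.2))
    (fun k _ => integrable_gaussDens_sub_mul_gaussDens_sub hr _ _)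
    (fun k _ => rpow_mul_gaussDens_sub_mul_gaussDens_sub_le_integral hr _ _ τ)

/-- Let `p` and `q` be finite mixtures of `N(·, rI_d)` Gaussian densities
on `ℝ^d`. Then the convolution `p ∗ q` satisfies
`(p ∗ q)(t) ≥ (πr)^{d/2} · p(τ) · q(t − τ)` for every `t, τ ∈ ℝ^d`. -/
theorem mixture_convolution_ge
    (d : ℕ) (hd : 1 ≤ d) (r : ℝ) (hr : 0 < r) (N M : ℕ) (hN : 1 ≤ N) (hM : 1 ≤ M)
    (w : Fin N → ℝ) (v : Fin M → ℝ)
    (hw : ∀ i, 0 ≤ w i) (hv : ∀ j, 0 ≤ v j)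
    (hw1 : ∑ i, w i = 1) (hv1 : ∑ j, v j = 1)
    (x : Fin N → EuclideanSpace ℝ (Fin d)) (y : Fin M → EuclideanSpace ℝ (Fin d))
    (p q : EuclideanSpace ℝ (Fin d) → ℝ)
    (hp : ∀ z, p z = ∑ i, w i * gaussDens d r (z - x i))
    (hq : ∀ z, q z = ∑ j, v j * gaussDens d r (z - y j)) :
    ∀ t τ : EuclideanSpace ℝ (Fin d),
      (Real.pi * r) ^ ((d : ℝ) / 2) * p τ * q (t - τ) ≤ ∫ σ, p σ * q (t - σ) :=
  mixture_convolution_ge_general d r hr N M w v hw hv x y p q hp hq
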